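/- Assume that for every invertible measure-preserving system (Ω, G, ν, S) on a probability space, all bounded measurable G1, G2 : Ω → ℂ, and all integers a, b, there exists a set of full ν-measure on which the averages (1/N) Σ_{n=1}^{N} G1(S^{an}ω) G2(S^{bn}ω) e^{2πi q(n)} converge for every polynomial q with real coefficients of degree at most 2 as N → ∞. Then for every invertible measure-preserving system (X, F, μ, T) on a probability space, all f1, f2 ∈ L^∞(μ), all integers a ≠ b, every polynomial p of degree 3 with real coefficients, and every t ∈ ℝ, the averages (1/N) Σ_{n=1}^{N} f1(T^{an}x) f2(T^{bn}x) e^{2πi p(n) t} converge for μ-almost every x as N → ∞. -/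

import Mathlib

/-!
Pass to the skew product `S (x, u, v, w) = (T x, u + α, v + u, w + v)` on `X × 𝕋³`. Its `m`-th
iterate moves `w` to `w + m v + C(m,2) u + C(m,3) α`, so twisting `f₁` by `e(w)` and `f₂` by
`e(-w)` turns the weights along `S^{an}, S^{bn}` into `f₁(T^{an}x) f₂(T^{bn}x)` times a cubic
phase in `n` with leading coefficient `(a³ - b³) α / 6`. As `a ≠ b`, choosing `α` matches this
with the leading coefficient of `p t`; the remaining discrepancy is a quadratic phase, covered by
the hypothesis. By Fubini, almost every `x` has a fibre point in the good set of the hypothesis.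
-/

open MeasureTheory Filter Finset

universe u

namespace Equiv.Perm

variable {α β : Type*}

theorem zpow_apply_eq_of_apply_eq_succ (e : Perm α) {F : ℤ → α} (hF : ∀ m, e (F m) = F (m + 1))
    (m : ℤ) : (e ^ m) (F 0) = F m := by
  induction m using Int.induction_on with
  | zero => rfl
  | succ k ih => rw [add_comm (k : ℤ), zpow_one_add, mul_apply, ih, hF, add_comm]
  | pred k ih =>
    apply e.injective
    rw [← mul_apply, ← zpow_one_add, hF, add_sub_cancel, sub_add_cancel, ih]

theorem prodCongr_zpow_apply (e : Perm α) (f : Perm β) (m : ℤ) (x : α) (y : β) :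
    (e.prodCongr f ^ m) (x, y) = ((e ^ m) x, (f ^ m) y) := by
  refine zpow_apply_eq_of_apply_eq_succ _ (F := fun m => ((e ^ m) x, (f ^ m) y)) (fun k => ?_) m
  simp only [prodCongr_apply, Prod.map, ← mul_apply, ← zpow_one_add, add_comm]

end Equiv.Perm

section

variable {X : Type*} [MeasurableSpace X] {μ : Measure X}

theorem MeasureTheory.MeasurePreserving.zpow_toEquiv {T : X ≃ᵐ X} (hT : MeasurePreserving T μ μ)
    (m : ℤ) : MeasurePreserving ⇑(T.toEquiv ^ m) μ μ := by
  cases m with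
  | ofNat n =>
    simpa only [Int.ofNat_eq_natCast, zpow_natCast, Equiv.Perm.coe_pow,
      MeasurableEquiv.coe_toEquiv] using hT.iterate n
  | negSucc n =>
    rw [zpow_negSucc, ← inv_pow, Equiv.Perm.coe_pow]
    exact (hT.symm T).iterate (n + 1)

theorem MeasureTheory.MeasurePreserving.ae_forall_zpow_apply_eq {β : Type*} {T : X ≃ᵐ X}
    (hT : MeasurePreserving T μ μ) {f g : X → β} (hfg : f =ᵐ[μ] g) :
    ∀ᵐ x ∂μ, ∀ m : ℤ, f ((T.toEquiv ^ m) x) = g ((T.toEquiv ^ m) x) :=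
  ae_all_iff.2 fun m => (hT.zpow_toEquiv m).quasiMeasurePreserving.ae_eq hfg

theorem MeasureTheory.MemLp.exists_measurable_bounded_ae_eq {E : Type*} [NormedAddCommGroup E]
    [MeasurableSpace E] [BorelSpace E] {f : X → E} (hf : MemLp f ⊤ μ) :
    ∃ g : X → E, Measurable g ∧ (∃ C : ℝ, ∀ x, ‖g x‖ ≤ C) ∧ f =ᵐ[μ] g := by
  obtain ⟨C, hC : ∀ᵐ x ∂μ, ‖f x‖₊ ≤ C⟩ := (eLpNormEssSup_lt_top_iff_isBoundedUnder (f := f)).1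
    (by simpa only [eLpNorm_exponent_top] using hf.2)
  set F := hf.1.mk f
  have hFm : Measurable F := hf.1.stronglyMeasurable_mk.measurable
  refine ⟨{x | ‖F x‖₊ ≤ C}.indicator F,
    hFm.indicator (measurableSet_le hFm.nnnorm measurable_const), ⟨C, fun x => ?_⟩, ?_⟩
  · by_cases hx : ‖F x‖₊ ≤ C
    · simpa [hx] using NNReal.coe_le_coe.2 hx
    · simp [hx]
  · filter_upwards [hf.1.ae_eq_mk, hC] with x hfx hx
    rw [Set.indicator_of_mem (by simpa only [Set.mem_ofPred_eq, F, ← hfx] using hx), hfx]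

theorem MeasureTheory.Measure.ae_exists_prod_mem {Y : Type*} [MeasurableSpace Y] {ν : Measure Y}
    [SFinite ν] [NeZero ν] {V : Set (X × Y)} (hV : ∀ᵐ z ∂μ.prod ν, z ∈ V) :
    ∀ᵐ x ∂μ, ∃ y, (x, y) ∈ V :=
  (ae_ae_of_ae_prod hV).mono fun _ hx => hx.exists

end

noncomputable section

local notation "𝕋" => UnitAddCircle

open AddCircle Polynomial

def cubicSkew (α : ℝ) : (𝕋 × 𝕋 × 𝕋) ≃ᵐ (𝕋 × 𝕋 × 𝕋) where
  toFun z := (z.1 + α, z.2.1 + z.1, z.2.2 + z.2.1)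
  invFun z := (z.1 - α, z.2.1 - (z.1 - α), z.2.2 - (z.2.1 - (z.1 - α)))
  left_inv z := by simp
  right_inv z := by simp
  measurable_toFun := by simp only [Equiv.coe_fn_mk]; fun_prop
  measurable_invFun := by simp only [Equiv.coe_fn_symm_mk]; fun_prop

abbrev torusMeasure : Measure (𝕋 × 𝕋 × 𝕋) :=
  haarAddCircle.prod (haarAddCircle.prod haarAddCircle)

theorem measurePreserving_cubicSkew (α : ℝ) :
    MeasurePreserving (cubicSkew α) torusMeasure torusMeasure :=
  (measurePreserving_add_right _ _).skew_product (by fun_prop) <| ae_of_all _ fun u =>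
    ((measurePreserving_add_right _ u).skew_product (by fun_prop) <| ae_of_all _ fun v =>
      (measurePreserving_add_right _ v).map_eq).map_eq

def cubicPhase (α u v m : ℝ) : ℝ :=
  m * v + (m ^ 2 - m) / 2 * u + (m ^ 3 - 3 * m ^ 2 + 2 * m) / 6 * α

theorem cubicSkew_zpow_apply (α u v w : ℝ) (m : ℤ) :
    ((cubicSkew α).toEquiv ^ m) ((u : 𝕋), (v : 𝕋), (w : 𝕋)) =
      (((u + m * α : ℝ) : 𝕋), ((v + m * u + (m ^ 2 - m) / 2 * α : ℝ) : 𝕋),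
        ((w + cubicPhase α u v m : ℝ) : 𝕋)) := by
  set F : ℤ → 𝕋 × 𝕋 × 𝕋 := fun m =>
    (((u + m * α : ℝ) : 𝕋), ((v + m * u + (m ^ 2 - m) / 2 * α : ℝ) : 𝕋),
      ((w + cubicPhase α u v m : ℝ) : 𝕋))
  have hF0 : F 0 = ((u : 𝕋), (v : 𝕋), (w : 𝕋)) := by simp [F, cubicPhase]
  refine hF0 ▸ Equiv.Perm.zpow_apply_eq_of_apply_eq_succ _ (fun k => ?_) m
  simp only [F, cubicPhase, cubicSkew, Equiv.coe_fn_mk, ← AddCircle.coe_add, Int.cast_add,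
    Int.cast_one, Prod.mk.injEq]
  refine ⟨congrArg _ ?_, congrArg _ ?_, congrArg _ ?_⟩ <;> ring

theorem exists_quadratic_add_cubicPhase_sub_eq {p : ℝ[X]} (hp : p.natDegree ≤ 3) {a b t α : ℝ}
    (hα : (a ^ 3 - b ^ 3) * α = 6 * (p.coeff 3 * t)) (u v : ℝ) :
    ∃ q : ℝ[X], q.degree ≤ 2 ∧ ∀ n : ℝ,
      cubicPhase α u v (a * n) - cubicPhase α u v (b * n) + q.eval n = p.eval n * t := by
  refine ⟨C (p.coeff 2 * t - (u - α) * (a ^ 2 - b ^ 2) / 2) * X ^ 2 +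
    C (p.coeff 1 * t - (a - b) * (v - u / 2 + α / 3)) * X + C (p.coeff 0 * t),
    degree_quadratic_le, fun n => ?_⟩
  simp only [eval_eq_sum_range' (Nat.lt_succ_of_le hp), sum_range_succ, sum_range_zero, eval_add,
    eval_mul, eval_pow, eval_C, eval_X, cubicPhase]
  linear_combination (n ^ 3 / 6) * hα

section

variable {X : Type*}

def fourierTwist (g : X → ℂ) (k : ℤ) (z : X × 𝕋 × 𝕋 × 𝕋) : ℂ := g z.1 * fourier k z.2.2.2

theorem measurable_fourierTwist [MeasurableSpace X] {g : X → ℂ} (hg : Measurable g) (k : ℤ) :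
    Measurable (fourierTwist g k) :=
  (hg.comp measurable_fst).mul ((fourier k).continuous.measurable.comp (by fun_prop))

theorem norm_fourierTwist_le {g : X → ℂ} {C : ℝ} (hg : ∀ x, ‖g x‖ ≤ C) (k : ℤ) (z) :
    ‖fourierTwist g k z‖ ≤ C := by
  simpa [fourierTwist, fourier_apply, Circle.norm_coe] using hg z.1

theorem fourierTwist_mul_fourierTwist_zpow [MeasurableSpace X] (T : X ≃ᵐ X) (g₁ g₂ : X → ℂ)
    (α u v w : ℝ) (x : X) (m₁ m₂ : ℤ) :
    let S := (T.prodCongr (cubicSkew α)).toEquiv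
    fourierTwist g₁ 1 ((S ^ m₁) (x, u, v, w)) * fourierTwist g₂ (-1) ((S ^ m₂) (x, u, v, w)) =
      g₁ ((T.toEquiv ^ m₁) x) * g₂ ((T.toEquiv ^ m₂) x) *
        Complex.exp (2 * Real.pi * Complex.I * (cubicPhase α u v m₁ - cubicPhase α u v m₂)) := by
  change fourierTwist g₁ 1 ((T.toEquiv.prodCongr (cubicSkew α).toEquiv ^ m₁) _) *
    fourierTwist g₂ (-1) ((T.toEquiv.prodCongr (cubicSkew α).toEquiv ^ m₂) _) = _
  simp only [Equiv.Perm.prodCongr_zpow_apply, cubicSkew_zpow_apply, fourierTwist,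
    fourier_coe_apply]
  rw [mul_mul_mul_comm, ← Complex.exp_add]
  congr 2
  push_cast
  ring

end

end

/-- If the Wiener-Wintner double recurrence theorem holds for polynomial weights of degree at
most `2` (for every invertible measure-preserving system and bounded measurable `G1, G2` there
is a full-measure set on which `(1/N) ∑_{n=1}^N G1(S^{an}ω) G2(S^{bn}ω) e^{2πi q(n)}` converges
for every real polynomial `q` of degree at most `2`), then for any invertible measure-preserving
system, `f1, f2 ∈ L^∞(μ)`, integers `a ≠ b`, any real polynomial `p` of degree `3` and any
`t ∈ ℝ`, the averages `(1/N) ∑_{n=1}^N f1(T^{an}x) f2(T^{bn}x) e^{2πi p(n) t}` converge μ-a.e. -/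
theorem wiener_wintner_deg_three_of_deg_two
    (hyp : ∀ (Ω : Type u) [MeasurableSpace Ω] (ν : Measure Ω) [IsProbabilityMeasure ν]
      (S : Ω ≃ᵐ Ω), MeasurePreserving S ν ν →
        ∀ (G1 G2 : Ω → ℂ), Measurable G1 → Measurable G2 →
          (∃ C : ℝ, ∀ ω, ‖G1 ω‖ ≤ C) → (∃ C : ℝ, ∀ ω, ‖G2 ω‖ ≤ C) →
            ∀ a b : ℤ, ∃ V : Set Ω, MeasurableSet V ∧ ν V = 1 ∧
              ∀ ω ∈ V, ∀ q : Polynomial ℝ, q.degree ≤ 2 → ∃ L : ℂ,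
                Tendsto (fun N : ℕ => (N : ℂ)⁻¹ * ∑ n ∈ Finset.Icc 1 N,
                    G1 ((S.toEquiv ^ (a * (n : ℤ))) ω) * G2 ((S.toEquiv ^ (b * (n : ℤ))) ω) *
                      Complex.exp (2 * Real.pi * Complex.I * (q.eval (n : ℝ))))
                  atTop (nhds L)) :
    ∀ (X : Type u) [MeasurableSpace X] (μ : Measure X) [IsProbabilityMeasure μ]
      (T : X ≃ᵐ X), MeasurePreserving T μ μ →
        ∀ (f1 f2 : X → ℂ), MemLp f1 ⊤ μ → MemLp f2 ⊤ μ →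
          ∀ (a b : ℤ), a ≠ b →
            ∀ (p : Polynomial ℝ), p.degree = 3 → ∀ (t : ℝ),
              ∀ᵐ x ∂μ, ∃ L : ℂ,
                Tendsto (fun N : ℕ => (N : ℂ)⁻¹ * ∑ n ∈ Finset.Icc 1 N,
                    f1 ((T.toEquiv ^ (a * (n : ℤ))) x) * f2 ((T.toEquiv ^ (b * (n : ℤ))) x) *
                      Complex.exp (2 * Real.pi * Complex.I * (p.eval (n : ℝ)) * t))
                  atTop (nhds L) := by
  intro X _ μ _ T hT f1 f2 hf1 hf2 a b hab p hp t
  obtain ⟨g1, hg1, ⟨C1, hC1⟩, hfg1⟩ := hf1.exists_measurable_bounded_ae_eq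
  obtain ⟨g2, hg2, ⟨C2, hC2⟩, hfg2⟩ := hf2.exists_measurable_bounded_ae_eq
  have hab3 : (a : ℝ) ^ 3 - (b : ℝ) ^ 3 ≠ 0 :=
    mod_cast sub_ne_zero.2 ((Odd.pow_inj (by decide)).not.2 hab)
  set α := 6 * (p.coeff 3 * t) / ((a : ℝ) ^ 3 - (b : ℝ) ^ 3)
  obtain ⟨V, hVm, hV1, hV⟩ := hyp _ (μ.prod torusMeasure) (T.prodCongr (cubicSkew α))
    (hT.prod (measurePreserving_cubicSkew α)) _ _ (measurable_fourierTwist hg1 1)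
    (measurable_fourierTwist hg2 (-1)) ⟨C1, norm_fourierTwist_le hC1 1⟩
    ⟨C2, norm_fourierTwist_le hC2 (-1)⟩ a b
  have hVae : ∀ᵐ z ∂μ.prod torusMeasure, z ∈ V :=
    (ae_mem_iff_measure_eq hVm.nullMeasurableSet).2 (by simp [hV1])
  filter_upwards [Measure.ae_exists_prod_mem hVae, hT.ae_forall_zpow_apply_eq hfg1,
    hT.ae_forall_zpow_apply_eq hfg2] with x ⟨⟨u, v, w⟩, hxV⟩ h1 h2
  obtain ⟨u, rfl⟩ := QuotientAddGroup.mk_surjective u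
  obtain ⟨v, rfl⟩ := QuotientAddGroup.mk_surjective v
  obtain ⟨w, rfl⟩ := QuotientAddGroup.mk_surjective w
  obtain ⟨q, hq, hpq⟩ := exists_quadratic_add_cubicPhase_sub_eq
    (Polynomial.natDegree_le_iff_degree_le.2 hp.le) (t := t) (mul_div_cancel₀ _ hab3) u v
  obtain ⟨L, hL⟩ := hV _ hxV q hq
  refine ⟨L, hL.congr fun N => congrArg _ (sum_congr rfl fun n _ => ?_)⟩
  rw [fourierTwist_mul_fourierTwist_zpow, h1, h2, mul_assoc, ← Complex.exp_add, ← mul_add]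
  simp only [Int.cast_mul, Int.cast_natCast, ← Complex.ofReal_sub, ← Complex.ofReal_add]
  rw [hpq, Complex.ofReal_mul, ← mul_assoc]
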